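/- arXiv:quant-ph/0307130 — 2 statements merged into one kernel-verified Lean document; each statement's English description precedes it below -/
import Mathlib

section
/- In a finite tree, if A is a minimal vertex cover and some connected component of the bipartite graph between A and its complement contains two distinct leaves belonging to A, then two such leaves in A cannot be adjacent to the same vertex of the complement; in particular, distinct leaves of A (with respect to G_AB) have distinct unique neighbors in B = A^c. -/
open scoped Classical

/-- The graph `G_AB` keeping only the edges of `G` between `A` and `B = Aᶜ`. -/
def bipartiteSub {V : Type*} [Fintype V] [DecidableEq V]
    (G : SimpleGraph V) (A : Finset V) : SimpleGraph V where
  Adj u v := G.Adj u v ∧ ((u ∈ A ∧ v ∈ Aᶜ) ∨ (u ∈ Aᶜ ∧ v ∈ A))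
  symm := by
    constructor
    intro u v h
    exact ⟨h.1.symm, h.2.symm.imp And.symm And.symm⟩
  loopless := ⟨fun v h => G.loopless.irrefl v h.1⟩

/-- A vertex cover of `G`. -/
def IsVertexCover {V : Type*} (G : SimpleGraph V) (C : Finset V) : Prop :=
  ∀ u v : V, G.Adj u v → u ∈ C ∨ v ∈ C

/-!
If two leaves `a₁ ≠ a₂` of `A` had the same neighbour `b` in `B`, then every edge at `a₁` or `a₂`
would end in `A \ {a₁, a₂}` or at `b`: the edge `a₁a₂` is excluded because it would close the
triangle `a₁ b a₂` in the tree. Swapping `{a₁, a₂}` for `b` would then give a smaller vertex cover.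
-/

namespace SimpleGraph

variable {V : Type*} {G : SimpleGraph V}

theorem IsAcyclic.not_adj_of_adj_of_adj (hG : G.IsAcyclic) {u v w : V} (huw : G.Adj u w)
    (hwv : G.Adj w v) (huv : u ≠ v) : ¬ G.Adj u v := by
  intro hvu
  refine hG (Walk.cons huw (Walk.cons hwv (Walk.cons hvu.symm Walk.nil))) ?_
  simp [Walk.cons_isCycle_iff, huw.ne', hwv.ne, huv, hvu.ne']

end SimpleGraph

section VertexCover

variable {V : Type*} {G : SimpleGraph V}

theorem IsVertexCover.insert_sdiff [DecidableEq V] {A S : Finset V} {b : V}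
    (hA : IsVertexCover G A) (hS : ∀ a ∈ S, ∀ v, G.Adj a v → v ∈ insert b (A \ S)) :
    IsVertexCover G (insert b (A \ S)) := by
  intro u v huv
  by_cases hu : u ∈ S
  · exact Or.inr (hS u hu v huv)
  by_cases hv : v ∈ S
  · exact Or.inl (hS v hv u huv.symm)
  exact (hA u v huv).imp (fun h => Finset.mem_insert_of_mem (Finset.mem_sdiff.2 ⟨h, hu⟩))
    (fun h => Finset.mem_insert_of_mem (Finset.mem_sdiff.2 ⟨h, hv⟩))

theorem IsVertexCover.exists_card_lt_of_neighbors_subset [DecidableEq V] {A : Finset V}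
    (hA : IsVertexCover G A) {a₁ a₂ b : V} (ha₁ : a₁ ∈ A) (ha₂ : a₂ ∈ A) (hne : a₁ ≠ a₂)
    (hnadj : ¬ G.Adj a₁ a₂) (h₁ : ∀ v, G.Adj a₁ v → v ∈ A ∨ v = b)
    (h₂ : ∀ v, G.Adj a₂ v → v ∈ A ∨ v = b) :
    ∃ C : Finset V, IsVertexCover G C ∧ C.card < A.card := by
  have hpair : {a₁, a₂} ⊆ A := Finset.insert_subset ha₁ (Finset.singleton_subset_iff.2 ha₂)
  refine ⟨insert b (A \ {a₁, a₂}), hA.insert_sdiff ?_, ?_⟩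
  · simp only [Finset.mem_insert, Finset.mem_singleton, Finset.mem_sdiff]
    rintro a (rfl | rfl) v hv
    · rcases h₁ v hv with hvA | rfl
      · exact Or.inr ⟨hvA, by rintro (rfl | rfl) <;> simp_all⟩
      · exact Or.inl rfl
    · rcases h₂ v hv with hvA | rfl
      · exact Or.inr ⟨hvA, by rintro (rfl | rfl) <;> simp_all [G.adj_comm]⟩
      · exact Or.inl rfl
  · have h2 : 2 ≤ A.card := Finset.card_pair hne ▸ Finset.card_le_card hpair
    calc (insert b (A \ {a₁, a₂})).card ≤ (A \ {a₁, a₂}).card + 1 := Finset.card_insert_le _ _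
      _ = A.card - 2 + 1 := by rw [Finset.card_sdiff_of_subset hpair, Finset.card_pair hne]
      _ < A.card := by omega

end VertexCover

section BipartiteSub

variable {V : Type*} [Fintype V] [DecidableEq V] {G : SimpleGraph V} {A : Finset V}

theorem mem_or_eq_of_bipartiteSub_leaf {a b v : V} (ha : a ∈ A)
    (hleaf : ((bipartiteSub G A).neighborSet a).ncard = 1) (hb : (bipartiteSub G A).Adj a b)
    (hv : G.Adj a v) : v ∈ A ∨ v = b := by
  by_cases hvA : v ∈ A
  · exact Or.inl hvA
  obtain ⟨x, hx⟩ := Set.ncard_eq_one.1 hleaf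
  have hvx : v ∈ ({x} : Set V) := hx ▸ ⟨hv, Or.inl ⟨ha, Finset.mem_compl.2 hvA⟩⟩
  have hbx : b ∈ ({x} : Set V) := hx ▸ hb
  exact Or.inr ((Set.eq_of_mem_singleton hvx).trans (Set.eq_of_mem_singleton hbx).symm)

end BipartiteSub

theorem tree_min_cover_leaves_distinct_neighbors_general {V : Type*} [Fintype V] [DecidableEq V]
    (G : SimpleGraph V) (hG : G.IsTree) (A : Finset V)
    (hcov : IsVertexCover G A)
    (hmin : ∀ C : Finset V, IsVertexCover G C → A.card ≤ C.card)
    (a₁ a₂ : V) (ha₁ : a₁ ∈ A) (ha₂ : a₂ ∈ A) (hne : a₁ ≠ a₂)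
    (hleaf₁ : ((bipartiteSub G A).neighborSet a₁).ncard = 1)
    (hleaf₂ : ((bipartiteSub G A).neighborSet a₂).ncard = 1) :
    ¬ ∃ b ∈ Aᶜ, (bipartiteSub G A).Adj a₁ b ∧ (bipartiteSub G A).Adj a₂ b := by
  rintro ⟨b, -, h₁b, h₂b⟩
  have hnadj : ¬ G.Adj a₁ a₂ := hG.isAcyclic.not_adj_of_adj_of_adj h₁b.1 h₂b.1.symm hne
  obtain ⟨C, hC, hlt⟩ := hcov.exists_card_lt_of_neighbors_subset ha₁ ha₂ hne hnadj
    (fun _ => mem_or_eq_of_bipartiteSub_leaf ha₁ hleaf₁ h₁b)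
    (fun _ => mem_or_eq_of_bipartiteSub_leaf ha₂ hleaf₂ h₂b)
  exact (hmin C hC).not_gt hlt

/-- In a finite tree, if `A` is a minimal vertex cover and two distinct vertices of `A`
are leaves of the bipartite graph `G_AB` between `A` and `B = Aᶜ` lying in the same
connected component of `G_AB`, then they cannot be adjacent to the same vertex of `B`;
in particular their unique neighbors in `B` are distinct. -/
theorem tree_min_cover_leaves_distinct_neighbors {V : Type*} [Fintype V] [DecidableEq V]
    (G : SimpleGraph V) (hG : G.IsTree) (A : Finset V)
    (hcov : IsVertexCover G A)
    (hmin : ∀ C : Finset V, IsVertexCover G C → A.card ≤ C.card)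
    (a₁ a₂ : V) (ha₁ : a₁ ∈ A) (ha₂ : a₂ ∈ A) (hne : a₁ ≠ a₂)
    (hleaf₁ : ((bipartiteSub G A).neighborSet a₁).ncard = 1)
    (hleaf₂ : ((bipartiteSub G A).neighborSet a₂).ncard = 1)
    (hcomp : (bipartiteSub G A).Reachable a₁ a₂) :
    ¬ ∃ b ∈ Aᶜ, (bipartiteSub G A).Adj a₁ b ∧ (bipartiteSub G A).Adj a₂ b :=
  tree_min_cover_leaves_distinct_neighbors_general G hG A hcov hmin a₁ a₂ ha₁ ha₂ hne hleaf₁ hleaf₂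
end

section
/- For the d-dimensional grid graph on an X × Y × Z box of vertices with X even, the bipartition A consisting of all vertices with even first coordinate satisfies: the bipartite graph G_{A,A^c} of edges between A and A^c is a disjoint union of Y·Z paths, and Γ_{A,A^c} has full column rank |A| = (X/2)·Y·Z over F2. -/
open scoped Classical

/-- The biadjacency matrix `Γ_{A,Aᶜ}` over `F₂`. -/
noncomputable def gammaAB {V : Type*} [Fintype V] [DecidableEq V]
    (G : SimpleGraph V) (A : Finset V) : Matrix ↥(Aᶜ) ↥A (ZMod 2) :=
  fun b a => if G.Adj (a : V) (b : V) then 1 else 0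

/-- The 3D grid (cluster) graph on `{1,…,X} × {1,…,Y} × {1,…,Z}`: vertices are
adjacent iff they differ by 1 in exactly one coordinate. -/
def gridGraph (X Y Z : ℕ) : SimpleGraph (Fin X × Fin Y × Fin Z) :=
  SimpleGraph.fromRel fun u v =>
    ((u.1 : ℕ) + 1 = (v.1 : ℕ) ∧ u.2 = v.2) ∨
    (u.1 = v.1 ∧ (u.2.1 : ℕ) + 1 = (v.2.1 : ℕ) ∧ u.2.2 = v.2.2) ∨
    (u.1 = v.1 ∧ u.2.1 = v.2.1 ∧ (u.2.2 : ℕ) + 1 = (v.2.2 : ℕ))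

/-!
Between layers of different parity only the edges along the first axis survive, so
`G_{A,Aᶜ}` is the box product of the path `P_X` with the edgeless graph on `Y × Z`:
`Y·Z` disjoint copies of `P_X`. For the rank, the row `(x - 1, p)` of `Γ_{A,Aᶜ}` meets the
column `(x, p)` and otherwise only the column `(x - 2, p)`, so ordering the columns by `x`
exhibits a triangular pivot in every column.
-/

namespace SimpleGraph

variable {V α β : Type*}

theorem isAcyclic_of_subsingleton_adj_le [LinearOrder α] {G : SimpleGraph V} (f : V → α)
    (h : ∀ v, {w | G.Adj v w ∧ f w ≤ f v}.Subsingleton) :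
    G.IsAcyclic := by
  -- Rotate a cycle to start at a vertex where `f` is maximal: its two cycle neighbours differ.
  intro v c hc
  obtain ⟨u, hu, hmax⟩ := c.support.toFinset.exists_max_image f ⟨v, by simp⟩
  rw [List.mem_toFinset] at hu
  set c' := c.rotate u hu
  have hc' : c'.IsCycle := hc.rotate hu
  have hle : ∀ i, f (c'.getVert i) ≤ f u := fun i =>
    hmax _ (List.mem_toFinset.2 ((c.mem_support_rotate_iff u hu).1 (c'.getVert_mem_support i)))
  exact hc'.snd_ne_penultimate <| h u ⟨c'.adj_snd hc'.not_nil, hle 1⟩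
    ⟨(c'.adj_penultimate hc'.not_nil).symm, hle _⟩

theorem reachable_boxProd_bot_iff {G : SimpleGraph α} (hG : G.Preconnected) {x y : α × β} :
    (G □ (⊥ : SimpleGraph β)).Reachable x y ↔ x.2 = y.2 := by
  simp [reachable_boxProd, hG x.1 y.1]

theorem card_connectedComponent_boxProd_bot {G : SimpleGraph α} (hG : G.Connected) :
    Nat.card (G □ (⊥ : SimpleGraph β)).ConnectedComponent = Nat.card β := by
  obtain ⟨a⟩ := hG.nonempty
  refine Nat.card_eq_of_bijective
    (ConnectedComponent.lift Prod.snd fun _ _ p _ =>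
      (reachable_boxProd_bot_iff hG.preconnected).1 ⟨p⟩)
    ⟨ConnectedComponent.ind₂ fun x y hxy => ?_,
      fun b => ⟨connectedComponentMk _ (a, b), rfl⟩⟩
  exact ConnectedComponent.sound ((reachable_boxProd_bot_iff hG.preconnected).2 hxy)

theorem ncard_neighborSet_boxProd_bot (G : SimpleGraph α) (x : α × β) :
    ((G □ (⊥ : SimpleGraph β)).neighborSet x).ncard = (G.neighborSet x.1).ncard := by
  simp [neighborSet_boxProd]

theorem ncard_neighborSet_pathGraph_le {n : ℕ} (u : Fin n) :
    ((pathGraph n).neighborSet u).ncard ≤ 2 :=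
  calc ((pathGraph n).neighborSet u).ncard
      ≤ ({(u : ℕ) - 1, (u : ℕ) + 1} : Set ℕ).ncard := by
        refine Set.ncard_le_ncard_of_injOn Fin.val (fun w hw => ?_) Fin.val_injective.injOn
        rw [mem_neighborSet, pathGraph_adj] at hw
        simp only [Set.mem_insert_iff, Set.mem_singleton_iff]
        omega
    _ ≤ 2 := (Set.ncard_insert_le _ _).trans (by simp)

theorem isAcyclic_pathGraph_boxProd_bot (n : ℕ) :
    (pathGraph n □ (⊥ : SimpleGraph β)).IsAcyclic := by
  refine isAcyclic_of_subsingleton_adj_le Prod.fst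
    fun v w₁ ⟨h₁, hle₁⟩ w₂ ⟨h₂, hle₂⟩ => ?_
  simp only [boxProd_adj, pathGraph_adj, bot_adj, false_and, or_false] at h₁ h₂
  refine Prod.ext (Fin.ext ?_) (h₁.2.symm.trans h₂.2)
  rw [Fin.le_def] at hle₁ hle₂
  omega

end SimpleGraph

namespace Matrix

theorem linearIndependent_col_of_pivot {m n R : Type*} [Fintype n] [CommRing R]
    [NoZeroDivisors R]
    (M : Matrix m n R) (σ : n → m) (f : n → ℕ) (hpivot : ∀ j, M (σ j) j ≠ 0)
    (hlower : ∀ j j', M (σ j) j' ≠ 0 → j' = j ∨ f j' < f j) :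
    LinearIndependent R M.col := by
  rw [Fintype.linearIndependent_iff]
  intro g hg
  suffices ∀ k j, f j = k → g j = 0 from fun j => this _ j rfl
  intro k
  induction k using Nat.strong_induction_on with
  | _ k ih =>
    rintro j rfl
    have hrow : ∑ j', g j' * M (σ j) j' = 0 := by
      simpa [mul_comm] using congrFun hg (σ j)
    rw [Finset.sum_eq_single j] at hrow
    · exact (mul_eq_zero.1 hrow).resolve_right (hpivot j)
    · intro j' _ hj'
      by_cases hM : M (σ j) j' = 0
      · rw [hM, mul_zero]
      · rw [ih _ ((hlower j j' hM).resolve_left hj') j' rfl, zero_mul]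
    · simp

theorem rank_eq_card_of_pivot {m n K : Type*} [Fintype m] [Fintype n] [Field K]
    (M : Matrix m n K) (σ : n → m) (f : n → ℕ) (hpivot : ∀ j, M (σ j) j ≠ 0)
    (hlower : ∀ j j', M (σ j) j' ≠ 0 → j' = j ∨ f j' < f j) :
    M.rank = Fintype.card n := by
  rw [← rank_transpose]
  exact LinearIndependent.rank_matrix
    (by simpa using M.linearIndependent_col_of_pivot σ f hpivot hlower)

end Matrix

open Finset in
theorem Fin.card_filter_val_mod_two_eq_one (n : ℕ) :
    #{x : Fin n | (x : ℕ) % 2 = 1} = n / 2 := by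
  rw [← card_range (n / 2)]
  refine (card_bij (fun i hi => (⟨2 * i + 1, by rw [mem_range] at hi; omega⟩ : Fin n))
    (by simp) (fun i _ j _ h => by simpa using h) fun x hx => ?_).symm
  rw [mem_filter] at hx
  exact ⟨x / 2, by rw [mem_range]; omega, Fin.ext (by simp; omega)⟩

theorem gammaAB_ne_zero_iff {V : Type*} [Fintype V] [DecidableEq V] (G : SimpleGraph V)
    (A : Finset V) (b : ↥(Aᶜ)) (a : ↥A) : gammaAB G A b a ≠ 0 ↔ G.Adj a b := by
  simp [gammaAB]

namespace gridGraph

open SimpleGraph Finset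

variable {X Y Z : ℕ}

/-- Coordinates are `0`-based here, so the odd layers are the paper's even ones. -/
def oddLayers (X Y Z : ℕ) : Finset (Fin X × Fin Y × Fin Z) :=
  univ.filter fun v => (v.1 : ℕ) % 2 = 1

theorem mem_oddLayers {v : Fin X × Fin Y × Fin Z} :
    v ∈ oddLayers X Y Z ↔ (v.1 : ℕ) % 2 = 1 := by
  simp [oddLayers]

theorem adj_iff_of_parity_ne {u v : Fin X × Fin Y × Fin Z}
    (h : (u.1 : ℕ) % 2 ≠ (v.1 : ℕ) % 2) :
    (gridGraph X Y Z).Adj u v ↔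
      (pathGraph X □ (⊥ : SimpleGraph (Fin Y × Fin Z))).Adj u v := by
  simp only [gridGraph, fromRel_adj, boxProd_adj, pathGraph_adj, bot_adj, false_and, or_false]
  grind

theorem bipartiteSub_oddLayers :
    bipartiteSub (gridGraph X Y Z) (oddLayers X Y Z) = pathGraph X □ ⊥ := by
  ext u v
  change (gridGraph X Y Z).Adj u v ∧ _ ↔ _
  simp only [mem_compl, mem_oddLayers]
  constructor
  · rintro ⟨hadj, hcross⟩
    exact (adj_iff_of_parity_ne (by omega)).1 hadj
  · intro hadj
    have hpar : (u.1 : ℕ) % 2 ≠ (v.1 : ℕ) % 2 := by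
      simp only [boxProd_adj, pathGraph_adj, bot_adj, false_and, or_false] at hadj
      omega
    exact ⟨(adj_iff_of_parity_ne hpar).2 hadj, by omega⟩

theorem card_oddLayers : #(oddLayers X Y Z) = X / 2 * Y * Z := by
  rw [oddLayers, ← univ_product_univ, filter_product_left fun x : Fin X => (x : ℕ) % 2 = 1,
    card_product, Fin.card_filter_val_mod_two_eq_one]
  simp [mul_assoc]

theorem rank_gammaAB_oddLayers :
    (gammaAB (gridGraph X Y Z) (oddLayers X Y Z)).rank = #(oddLayers X Y Z) := by
  have hodd (j : oddLayers X Y Z) : ((j : Fin X × Fin Y × Fin Z).1 : ℕ) % 2 = 1 :=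
    mem_oddLayers.1 j.2
  have hadj (j : oddLayers X Y Z) (b : ↥(oddLayers X Y Z)ᶜ) :
      gammaAB (gridGraph X Y Z) _ b j ≠ 0 ↔
        ((j : Fin X × Fin Y × Fin Z).1 + 1 = ((b : Fin X × Fin Y × Fin Z).1 : ℕ) ∨
          ((b : Fin X × Fin Y × Fin Z).1 : ℕ) + 1 = (j : Fin X × Fin Y × Fin Z).1) ∧
          (j : Fin X × Fin Y × Fin Z).2 = (b : Fin X × Fin Y × Fin Z).2 := by
    have hb := b.2
    rw [mem_compl, mem_oddLayers] at hb
    rw [gammaAB_ne_zero_iff, adj_iff_of_parity_ne (by grind)]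
    simp [pathGraph_adj]
  rw [← Fintype.card_coe]
  refine Matrix.rank_eq_card_of_pivot _
    (fun j => ⟨(⟨(j.1.1 : ℕ) - 1, by omega⟩, j.1.2), by
      rw [mem_compl, mem_oddLayers]; grind⟩)
    (fun j => (j.1.1 : ℕ)) (fun j => (hadj _ _).2 ⟨by grind, rfl⟩) fun j j' h => ?_
  rw [hadj] at h
  by_cases hx : (j'.1.1 : ℕ) = j.1.1
  · exact Or.inl (Subtype.ext (Prod.ext (Fin.ext hx) h.2))
  · exact Or.inr (by grind)

end gridGraph

open SimpleGraph gridGraph in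
theorem grid_even_slices_full_rank_general (X Y Z : ℕ) (hX0 : 0 < X) :
    ∀ A : Finset (Fin X × Fin Y × Fin Z),
      A = Finset.univ.filter (fun v => (v.1 : ℕ) % 2 = 1) →
      (bipartiteSub (gridGraph X Y Z) A).IsAcyclic ∧
      (∀ v, ((bipartiteSub (gridGraph X Y Z) A).neighborSet v).ncard ≤ 2) ∧
      Nat.card (bipartiteSub (gridGraph X Y Z) A).ConnectedComponent = Y * Z ∧
      A.card = X / 2 * Y * Z ∧
      (gammaAB (gridGraph X Y Z) A).rank = A.card := by
  intro A hA
  obtain rfl : A = oddLayers X Y Z := hA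
  have : NeZero X := ⟨hX0.ne'⟩
  rw [bipartiteSub_oddLayers]
  refine ⟨isAcyclic_pathGraph_boxProd_bot X, fun v => ?_, ?_, card_oddLayers,
    rank_gammaAB_oddLayers⟩
  · exact (ncard_neighborSet_boxProd_bot _ v).trans_le (ncard_neighborSet_pathGraph_le v.1)
  · rw [card_connectedComponent_boxProd_bot ⟨pathGraph_preconnected X⟩, Nat.card_prod]
    simp

/-- For the `X × Y × Z` grid graph with `X > 0` even and `A` the set of vertices with
even first coordinate (in 1-based labelling), the bipartite graph `G_{A,Aᶜ}` is a
disjoint union of `Y·Z` paths (it is acyclic, has maximum degree at most `2`, and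
exactly `Y·Z` connected components), and `Γ_{A,Aᶜ}` has full column rank
`|A| = (X/2)·Y·Z` over `F₂`. -/
theorem grid_even_slices_full_rank (X Y Z : ℕ) (hX : Even X) (hX0 : 0 < X) :
    ∀ A : Finset (Fin X × Fin Y × Fin Z),
      A = Finset.univ.filter (fun v => (v.1 : ℕ) % 2 = 1) →
      (bipartiteSub (gridGraph X Y Z) A).IsAcyclic ∧
      (∀ v, ((bipartiteSub (gridGraph X Y Z) A).neighborSet v).ncard ≤ 2) ∧
      Nat.card (bipartiteSub (gridGraph X Y Z) A).ConnectedComponent = Y * Z ∧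
      A.card = X / 2 * Y * Z ∧
      (gammaAB (gridGraph X Y Z) A).rank = A.card :=
  grid_even_slices_full_rank_general X Y Z hX0
end
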